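/- The function v(x) = log( 8λ² / [λ² + (x¹+s₀)² + (x²+a+λ/√2)²]² ) satisfies the Neumann boundary condition ∂v/∂n = e^{v/2} on the boundary line {x² = -a}, where n = (0,-1) is the outward unit normal to the half-plane {x² > -a}. -/

import Mathlib

/-! On the line `x² = -a` the quadratic `λ² + (x¹ + s₀)² + (x² + a + λ/√2)²` takes the value
`D = λ² + (x¹ + s₀)² + λ²/2` and has `x²`-derivative `√2 λ`, so `-∂v/∂x² = 2√2 λ / D`.
This is also `e^{v/2} = √(8λ²) / D`, since `√(8λ²) = 2√2 λ`. -/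

open Real

lemma hasDerivAt_const_sub_two_mul_log_add_sq (C K a c : ℝ) (hD : 0 < K + c ^ 2) :
    HasDerivAt (fun t => C - 2 * log (K + (t + a + c) ^ 2)) (-(4 * c / (K + c ^ 2))) (-a) := by
  have hshift : -a + a + c = c := by ring
  have hquad : HasDerivAt (fun t => K + (t + a + c) ^ 2) (2 * c) (-a) := by
    simpa [hshift] using (((hasDerivAt_id (-a)).add_const a).add_const c).pow 2 |>.const_add K
  have hlog := hquad.log (by rw [hshift]; exact hD.ne')
  rw [hshift] at hlog
  exact ((hlog.const_mul 2).const_sub C).congr_deriv (by ring)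

lemma exp_half_log_sub_two_mul_log {A D : ℝ} (hA : 0 < A) (hD : 0 < D) :
    exp ((log A - 2 * log D) / 2) = √A / D := by
  have hhalf : (log A - 2 * log D) / 2 = log √A - log D := by
    rw [log_sqrt hA.le]
    ring
  rw [hhalf, exp_sub, exp_log (sqrt_pos.2 hA), exp_log hD]

lemma sqrt_eight_mul_sq {lam : ℝ} (hlam : 0 ≤ lam) : √(8 * lam ^ 2) = 4 * (lam / √2) := by
  have h8 : 8 * lam ^ 2 = (4 * (lam / √2)) ^ 2 := by
    rw [mul_pow, div_pow, sq_sqrt zero_le_two]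
    ring
  rw [h8, sqrt_sq (by positivity)]

theorem stmt_1_general (lam s₀ a : ℝ) (hlam : 0 < lam)
    (v : ℝ → ℝ → ℝ)
    (hv : ∀ x1 x2 : ℝ, v x1 x2 =
      Real.log (8 * lam ^ 2) -
        2 * Real.log (lam ^ 2 + (x1 + s₀) ^ 2 + (x2 + a + lam / Real.sqrt 2) ^ 2)) :
    ∀ x1 : ℝ, -(deriv (fun t => v x1 t) (-a)) = Real.exp (v x1 (-a) / 2) := by
  intro x1
  set K := lam ^ 2 + (x1 + s₀) ^ 2
  set c := lam / √2
  have hD : 0 < K + c ^ 2 := by positivity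
  have hderiv : deriv (fun t => v x1 t) (-a) = -(4 * c / (K + c ^ 2)) := by
    simp only [hv]
    exact (hasDerivAt_const_sub_two_mul_log_add_sq _ K a c hD).deriv
  have hboundary : v x1 (-a) = log (8 * lam ^ 2) - 2 * log (K + c ^ 2) := by
    rw [hv, neg_add_cancel, zero_add]
  rw [hderiv, hboundary, exp_half_log_sub_two_mul_log (by positivity) hD,
    sqrt_eight_mul_sq hlam.le, neg_neg]

/-- The bubble `v` satisfies the Neumann boundary condition `∂v/∂n = e^{v/2}` on `{x² = -a}`,
where the outward normal derivative at `(x¹, -a)` is `-∂v/∂x²(x¹, -a)`. -/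
theorem stmt_1 (lam s₀ a : ℝ) (hlam : 0 < lam) (ha : 0 ≤ a)
    (v : ℝ → ℝ → ℝ)
    (hv : ∀ x1 x2 : ℝ, v x1 x2 =
      Real.log (8 * lam ^ 2) -
        2 * Real.log (lam ^ 2 + (x1 + s₀) ^ 2 + (x2 + a + lam / Real.sqrt 2) ^ 2)) :
    ∀ x1 : ℝ, -(deriv (fun t => v x1 t) (-a)) = Real.exp (v x1 (-a) / 2) :=
  stmt_1_general lam s₀ a hlam v hv
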